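/- Let N ≥ 2 and p > 1. Then for every u ∈ C_0^∞(ℝ^N) one has ∫_{ℝ^N_+} |u|^p / (1+x_N)^p dx ≤ (p/(p−1))^p ∫_{ℝ^N_+} |∇u|^p dx + (p/(p−1)) ∫_{ℝ^{N-1}} |u(x',0)|^p dx', where ℝ^N_+ = {(x',x_N) ∈ ℝ^N : x_N > 0}. (This follows from the type-II Hardy inequality with the weight W(x) = (1+x_N)^{1−p}.) -/

import Mathlib

open MeasureTheory Real Set

noncomputable section

/-- The upper half-space `ℝ^N_+ = {(x', x_N) : x_N > 0}` in `ℝ^{N-1} × ℝ`. -/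
def upperHalfSpace (n : ℕ) : Set ((Fin n → ℝ) × ℝ) := {x | 0 < x.2}

lemma cont_psi {p : ℝ} (hp : 1 < p) : Continuous (fun y : ℝ => p * |y| ^ (p - 2) * y) := by
  have h1 : ContDiff ℝ 1 (fun y : ℝ => ‖y‖ ^ p) := contDiff_norm_rpow hp
  have h2 := h1.continuous_deriv le_rfl
  have h3 : (deriv fun y : ℝ => ‖y‖ ^ p) = fun y : ℝ => p * |y| ^ (p - 2) * y := by
    ext y
    rw [(hasDerivAt_norm_rpow y hp).deriv, Real.norm_eq_abs]
  rwa [h3] at h2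

lemma abs_psi_le {p : ℝ} (hp : 1 < p) (y : ℝ) : |p * |y| ^ (p - 2) * y| ≤ p * |y| ^ (p - 1) := by
  rcases eq_or_ne y 0 with rfl | hy
  · simp [Real.zero_rpow (by linarith : p - 1 ≠ 0)]
  · have h0 : (0:ℝ) < |y| := abs_pos.mpr hy
    rw [abs_mul, abs_mul, abs_of_nonneg (by linarith : (0:ℝ) ≤ p),
      abs_of_nonneg (Real.rpow_nonneg h0.le _)]
    rw [show p - 1 = (p - 2) + 1 by ring, Real.rpow_add_one h0.ne', mul_assoc]

lemma oneD {p : ℝ} (hp : 1 < p) (v : ℝ → ℝ) (hv : ContDiff ℝ (⊤ : ℕ∞) v) (hs : HasCompactSupport v) :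
    ∫ t in Ioi (0:ℝ), |v t| ^ p / (1 + t) ^ p
      ≤ (p / (p - 1)) ^ p * (∫ t in Ioi (0:ℝ), |deriv v t| ^ p) + (p / (p - 1)) * |v 0| ^ p := by
  have hp0 : (0:ℝ) < p := by linarith
  have hp1 : (0:ℝ) < p - 1 := by linarith
  have hc0 : (0:ℝ) < p / (p - 1) := by positivity
  -- find T beyond the support
  obtain ⟨R, hR⟩ := hs.isCompact.isBounded.subset_ball 0
  set T : ℝ := max R 1 with hT
  have hT1 : (0:ℝ) < T := lt_of_lt_of_le one_pos (le_max_right _ _)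
  have hTle : (0:ℝ) ≤ T := hT1.le
  have hout : ∀ t : ℝ, T ≤ t → t ∉ tsupport v := by
    intro t ht hmem
    have := hR hmem
    rw [Metric.mem_ball, Real.dist_eq, sub_zero] at this
    have h1 : t < R := lt_of_abs_lt this
    have h2 : R ≤ T := le_max_left _ _
    linarith
  have hvT : ∀ t : ℝ, T ≤ t → v t = 0 := fun t ht =>
    image_eq_zero_of_notMem_tsupport (hout t ht)
  have hdT : ∀ t : ℝ, T ≤ t → deriv v t = 0 := by
    intro t ht
    by_contra h
    exact hout t ht (support_deriv_subset h)
  set c : ℝ := p / (p - 1) with hc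
  -- pieces
  set f' : ℝ → ℝ := fun t => p * |v t| ^ (p - 2) * v t * deriv v t with hf'
  set w : ℝ → ℝ := fun t => (1 + t) ^ (1 - p) with hw
  set B : ℝ → ℝ := fun t => |v t| ^ p * (1 + t) ^ (-p) with hB
  set G : ℝ → ℝ := fun t => |v t| ^ p * (1 + t) ^ (1 - p) with hG
  have hvc : Continuous v := hv.continuous
  have hdc : Continuous (deriv v) := hv.continuous_deriv (by simp)
  have hfc : Continuous f' := ((cont_psi hp).comp hvc).mul hdc
  have habsp : Continuous (fun t => |v t| ^ p) :=
    (hvc.abs).rpow_const (fun t => Or.inr hp0.le)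
  have hdp : Continuous (fun t => |deriv v t| ^ p) :=
    (hdc.abs).rpow_const (fun t => Or.inr hp0.le)
  have h1t : ∀ t : ℝ, t ∈ Icc (0:ℝ) T → (0:ℝ) < 1 + t := fun t ht => by linarith [ht.1]
  have hwco : ContinuousOn w (Icc 0 T) :=
    ContinuousOn.rpow_const ((continuous_const.add continuous_id).continuousOn)
      (fun t ht => Or.inl (h1t t ht).ne')
  have hmpco : ContinuousOn (fun t : ℝ => (1 + t) ^ (-p)) (Icc 0 T) :=
    ContinuousOn.rpow_const ((continuous_const.add continuous_id).continuousOn)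
      (fun t ht => Or.inl (h1t t ht).ne')
  have hBco : ContinuousOn B (Icc 0 T) := habsp.continuousOn.mul hmpco
  have huIcc : uIcc (0:ℝ) T = Icc 0 T := uIcc_of_le hTle
  -- derivative of G
  have hGd : ∀ t ∈ uIcc (0:ℝ) T,
      HasDerivAt G (f' t * w t + |v t| ^ p * ((1 - p) * (1 + t) ^ (-p))) t := by
    intro t ht
    rw [huIcc] at ht
    have h1 : (0:ℝ) < 1 + t := h1t t ht
    have hfd : HasDerivAt (fun s => |v s| ^ p) (f' t) t := by
      have h := (hasDerivAt_abs_rpow (v t) hp).comp t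
        ((hv.differentiable (by simp) t).hasDerivAt)
      exact h
    have hwd : HasDerivAt w ((1 - p) * (1 + t) ^ (-p)) t := by
      have h := (Real.hasDerivAt_rpow_const (x := 1 + t) (p := 1 - p)
        (Or.inl h1.ne')).comp t ((hasDerivAt_id t).const_add 1)
      rw [show (1:ℝ) - p - 1 = -p by ring, mul_one] at h
      exact h
    exact hfd.mul hwd
  -- interval integrability
  have hint1 : IntervalIntegrable (fun t => f' t * w t) volume 0 T :=
    (hfc.continuousOn.mul hwco).intervalIntegrable_of_Icc hTle
  have hint2 : IntervalIntegrable (fun t => |v t| ^ p * ((1 - p) * (1 + t) ^ (-p)))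
      volume 0 T := by
    have : ContinuousOn (fun t : ℝ => |v t| ^ p * ((1 - p) * (1 + t) ^ (-p))) (Icc 0 T) :=
      habsp.continuousOn.mul (continuousOn_const.mul hmpco)
    exact this.intervalIntegrable_of_Icc hTle
  have hintB : IntervalIntegrable B volume 0 T := hBco.intervalIntegrable_of_Icc hTle
  have hintD : IntervalIntegrable (fun t => |deriv v t| ^ p) volume 0 T :=
    hdp.intervalIntegrable _ _
  -- FTC
  have hFTC : ∫ t in (0:ℝ)..T, (f' t * w t + |v t| ^ p * ((1 - p) * (1 + t) ^ (-p)))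
      = G T - G 0 :=
    intervalIntegral.integral_eq_sub_of_hasDerivAt hGd (hint1.add hint2)
  have hGT : G T = 0 := by
    simp only [hG, hvT T le_rfl, abs_zero, Real.zero_rpow hp0.ne', zero_mul]
  have hG0 : G 0 = |v 0| ^ p := by
    simp only [hG, add_zero, Real.one_rpow, mul_one]
  rw [intervalIntegral.integral_add hint1 hint2, hGT, zero_sub, hG0] at hFTC
  have hsplit : ∫ t in (0:ℝ)..T, |v t| ^ p * ((1 - p) * (1 + t) ^ (-p))
      = (1 - p) * ∫ t in (0:ℝ)..T, B t := by
    rw [← intervalIntegral.integral_const_mul]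
    apply intervalIntegral.integral_congr
    intro t ht
    simp only [hB]; ring
  rw [hsplit] at hFTC
  set IA : ℝ := ∫ t in (0:ℝ)..T, f' t * w t with hIA
  set IB : ℝ := ∫ t in (0:ℝ)..T, B t with hIB
  set JT : ℝ := ∫ t in (0:ℝ)..T, |deriv v t| ^ p with hJT
  -- hFTC : IA + (1 - p) * IB = -|v 0| ^ p
  -- Young's inequality pointwise
  set th : ℝ := ((p - 1) / p) ^ ((p - 1) / p) with hth
  have hx0 : (0:ℝ) < (p - 1) / p := by positivity
  have hth0 : (0:ℝ) < th := Real.rpow_pos_of_pos hx0 _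
  have hq : ((p / (p - 1)) : ℝ).HolderConjugate p := (Real.HolderConjugate.conjExponent hp).symm
  have hthq : th ^ (p / (p - 1)) = (p - 1) / p := by
    rw [hth, ← Real.rpow_mul hx0.le,
      show (p - 1) / p * (p / (p - 1)) = 1 by field_simp, Real.rpow_one]
  have hthp : th⁻¹ ^ p = c ^ (p - 1) := by
    rw [Real.inv_rpow hth0.le, hth, ← Real.rpow_mul hx0.le,
      show (p - 1) / p * p = p - 1 by field_simp, ← Real.inv_rpow hx0.le, inv_div, hc]
  have hpne : p ≠ 0 := hp0.ne'
  have hp1ne : p - 1 ≠ 0 := hp1.ne'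
  have hyoung : ∀ t ∈ Icc (0:ℝ) T,
      f' t * w t ≤ (p - 1) * ((p - 1) / p) * B t + c ^ (p - 1) * |deriv v t| ^ p := by
    intro t ht
    have h1 : (0:ℝ) < 1 + t := h1t t ht
    have hw0 : (0:ℝ) ≤ w t := Real.rpow_nonneg h1.le _
    set m : ℝ := |v t| ^ (p - 1) * w t with hm
    set d : ℝ := |deriv v t| with hd
    have hm0 : (0:ℝ) ≤ m := mul_nonneg (Real.rpow_nonneg (abs_nonneg _) _) hw0
    have hd0 : (0:ℝ) ≤ d := abs_nonneg _
    have step1 : f' t * w t ≤ p * (m * d) := by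
      have h2' : |f' t| ≤ p * |v t| ^ (p - 1) * d :=
        calc |f' t| = |p * |v t| ^ (p - 2) * v t| * d := by rw [hf', abs_mul]
          _ ≤ p * |v t| ^ (p - 1) * d :=
              mul_le_mul_of_nonneg_right (abs_psi_le hp _) hd0
      calc f' t * w t ≤ |f' t| * w t := mul_le_mul_of_nonneg_right (le_abs_self _) hw0
        _ ≤ p * |v t| ^ (p - 1) * d * w t := mul_le_mul_of_nonneg_right h2' hw0
        _ = p * (m * d) := by rw [hm]; ring
    have hmq : m ^ (p / (p - 1)) = B t := by
      rw [hm, hw, hB, Real.mul_rpow (Real.rpow_nonneg (abs_nonneg _) _)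
          (Real.rpow_nonneg h1.le _),
        ← Real.rpow_mul (abs_nonneg _), ← Real.rpow_mul h1.le,
        show (p - 1) * (p / (p - 1)) = p by field_simp,
        show (1 - p) * (p / (p - 1)) = -p by field_simp; ring]
    have hyg := Real.young_inequality_of_nonneg (mul_nonneg hth0.le hm0)
      (mul_nonneg (inv_nonneg.mpr hth0.le) hd0) hq
    rw [Real.mul_rpow hth0.le hm0, Real.mul_rpow (inv_nonneg.mpr hth0.le) hd0,
      hthq, hthp, hmq] at hyg
    have hmd : m * d = th * m * (th⁻¹ * d) := by
      field_simp
    calc f' t * w t ≤ p * (m * d) := step1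
      _ = p * (th * m * (th⁻¹ * d)) := by rw [hmd]
      _ ≤ p * ((p - 1) / p * B t / (p / (p - 1)) + c ^ (p - 1) * d ^ p / p) :=
          mul_le_mul_of_nonneg_left hyg hp0.le
      _ = (p - 1) * ((p - 1) / p) * B t + c ^ (p - 1) * d ^ p := by
          field_simp
  have hIAle : IA ≤ (p - 1) * ((p - 1) / p) * IB + c ^ (p - 1) * JT := by
    have hmono := intervalIntegral.integral_mono_on hTle hint1
      ((hintB.const_mul _).add (hintD.const_mul _)) hyoung
    calc IA ≤ ∫ t in (0:ℝ)..T,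
          ((p - 1) * ((p - 1) / p) * B t + c ^ (p - 1) * |deriv v t| ^ p) := hmono
      _ = (p - 1) * ((p - 1) / p) * IB + c ^ (p - 1) * JT := by
          rw [intervalIntegral.integral_add (hintB.const_mul _) (hintD.const_mul _),
            intervalIntegral.integral_const_mul, intervalIntegral.integral_const_mul]
  have hcomb : (p - 1) / p * IB ≤ |v 0| ^ p + c ^ (p - 1) * JT := by
    have hid : (p - 1) * IB - (p - 1) * ((p - 1) / p) * IB = (p - 1) / p * IB := by
      field_simp; ring
    linarith
  have hfinal : IB ≤ c ^ p * JT + c * |v 0| ^ p := by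
    have h2 := mul_le_mul_of_nonneg_left hcomb hc0.le
    have h3 : c * ((p - 1) / p * IB) = IB := by rw [hc]; field_simp
    have h4 : c * c ^ (p - 1) = c ^ p := by
      have h5 := Real.rpow_add hc0 1 (p - 1)
      rw [show (1:ℝ) + (p - 1) = p by ring, Real.rpow_one] at h5
      linarith
    rw [h3, mul_add, ← mul_assoc, h4] at h2
    linarith
  -- convert to integrals over `Ioi 0`
  have hz : EqOn B (fun _ => (0:ℝ)) (Ioi T) := by
    intro t ht
    simp [hB, hvT t (le_of_lt ht), Real.zero_rpow hpne]
  have hBIoc : IntegrableOn B (Ioc 0 T) :=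
    (hBco.integrableOn_Icc).mono_set Ioc_subset_Icc_self
  have hBIoiT : IntegrableOn B (Ioi T) :=
    (integrableOn_zero).congr_fun (fun t ht => (hz ht).symm) measurableSet_Ioi
  have hIoiB : ∫ t in Ioi (0:ℝ), |v t| ^ p / (1 + t) ^ p = IB := by
    have hcong : ∀ t ∈ Ioi (0:ℝ), |v t| ^ p / (1 + t) ^ p = B t := by
      intro t ht
      simp only [hB]
      rw [Real.rpow_neg (by linarith [mem_Ioi.mp ht] : (0:ℝ) ≤ 1 + t), div_eq_mul_inv]
    rw [setIntegral_congr_fun measurableSet_Ioi hcong,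
      ← Ioc_union_Ioi_eq_Ioi hTle,
      setIntegral_union (Ioc_disjoint_Ioi le_rfl) measurableSet_Ioi hBIoc hBIoiT,
      setIntegral_congr_fun measurableSet_Ioi hz, integral_zero, add_zero,
      hIB, intervalIntegral.integral_of_le hTle]
  have hDcs : HasCompactSupport (fun t => |deriv v t| ^ p) := by
    apply (hs.deriv).comp_left (g := fun y : ℝ => |y| ^ p)
    simp [Real.zero_rpow hpne]
  have hDint : IntegrableOn (fun t => |deriv v t| ^ p) (Ioi 0) :=
    (hdp.integrable_of_hasCompactSupport hDcs).integrableOn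
  have hJle : JT ≤ ∫ t in Ioi (0:ℝ), |deriv v t| ^ p := by
    rw [hJT, intervalIntegral.integral_of_le hTle]
    apply setIntegral_mono_set hDint
      (Filter.Eventually.of_forall fun t => by positivity)
      ((Ioc_subset_Ioi_self).eventuallyLE)
  calc ∫ t in Ioi (0:ℝ), |v t| ^ p / (1 + t) ^ p = IB := hIoiB
    _ ≤ c ^ p * JT + c * |v 0| ^ p := hfinal
    _ ≤ c ^ p * (∫ t in Ioi (0:ℝ), |deriv v t| ^ p) + c * |v 0| ^ p := by
        have : (0:ℝ) ≤ c ^ p := Real.rpow_nonneg hc0.le _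
        nlinarith [hJle]

/-- **Hardy inequality with boundary term on the half-space** (Example 2.7, improving
Abreu–Félix–Medeiros): for every `u ∈ C_0^∞(ℝ^N)`,
`∫_{ℝ^N_+} |u|^p/(1+x_N)^p dx ≤ (p/(p-1))^p ∫_{ℝ^N_+} |∇u|^p dx
  + (p/(p-1)) ∫_{ℝ^{N-1}} |u(x',0)|^p dx'`. -/
theorem hardy_with_boundary_term {n : ℕ} (hn : 1 ≤ n) (p : ℝ) (hp : 1 < p)
    (u : ((Fin n → ℝ) × ℝ) → ℝ) (hu : ContDiff ℝ (⊤ : ℕ∞) u) (husupp : HasCompactSupport u) :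
    ∫ x in upperHalfSpace n, |u x| ^ p / (1 + x.2) ^ p
      ≤ (p / (p - 1)) ^ p * (∫ x in upperHalfSpace n, ‖fderiv ℝ u x‖ ^ p)
        + (p / (p - 1)) * ∫ x' : Fin n → ℝ, |u (x', 0)| ^ p := by

  have hp0 : (0:ℝ) < p := by linarith
  have hpne : p ≠ 0 := hp0.ne'
  have hSset : upperHalfSpace n = (univ : Set (Fin n → ℝ)) ×ˢ Ioi (0:ℝ) := by
    ext x; simp [upperHalfSpace, Set.mem_prod, mem_Ioi]
  have hvol : (volume : Measure ((Fin n → ℝ) × ℝ))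
      = (volume : Measure (Fin n → ℝ)).prod volume := rfl
  set F : ((Fin n → ℝ) × ℝ) → ℝ := fun x => |u x| ^ p / (1 + x.2) ^ p with hF
  set H : ((Fin n → ℝ) × ℝ) → ℝ := fun x => ‖fderiv ℝ u x‖ ^ p with hH
  have hucont : Continuous u := hu.continuous
  have huabs : Continuous (fun x => |u x| ^ p) :=
    (hucont.abs).rpow_const (fun _ => Or.inr hp0.le)
  have huabs_cs : HasCompactSupport (fun x => |u x| ^ p) :=
    husupp.comp_left (g := fun y : ℝ => |y| ^ p) (by simp [Real.zero_rpow hpne])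
  have huabs_int : Integrable (fun x => |u x| ^ p) :=
    huabs.integrable_of_hasCompactSupport huabs_cs
  have hfd_cont : Continuous (fderiv ℝ u) := hu.continuous_fderiv (by simp)
  have hH_cont : Continuous H := (hfd_cont.norm).rpow_const (fun _ => Or.inr hp0.le)
  have hH_cs : HasCompactSupport H := by
    apply (husupp.fderiv (𝕜 := ℝ)).comp_left
      (g := fun y : ((Fin n → ℝ) × ℝ) →L[ℝ] ℝ => ‖y‖ ^ p)
    simp [Real.zero_rpow hpne]
  have hH_int : Integrable H := hH_cont.integrable_of_hasCompactSupport hH_cs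
  have hmsS : MeasurableSet ((univ : Set (Fin n → ℝ)) ×ˢ Ioi (0:ℝ)) :=
    MeasurableSet.univ.prod measurableSet_Ioi
  have hone : ∀ x : (Fin n → ℝ) × ℝ, x ∈ (univ : Set (Fin n → ℝ)) ×ˢ Ioi (0:ℝ) →
      (0:ℝ) < 1 + x.2 := by
    intro x hx
    have : (0:ℝ) < x.2 := hx.2
    linarith
  -- integrability of F on the half-space
  have hFco : ContinuousOn F ((univ : Set (Fin n → ℝ)) ×ˢ Ioi (0:ℝ)) := by
    apply ContinuousOn.div huabs.continuousOn
      (ContinuousOn.rpow_const (by fun_prop) (fun x hx => Or.inl (hone x hx).ne'))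
    intro x hx
    exact (Real.rpow_pos_of_pos (hone x hx) p).ne'
  have hFint : IntegrableOn F ((univ : Set (Fin n → ℝ)) ×ˢ Ioi (0:ℝ)) := by
    apply Integrable.mono' huabs_int.integrableOn
      (hFco.aestronglyMeasurable hmsS)
    rw [ae_restrict_iff' hmsS]
    refine Filter.Eventually.of_forall (fun x hx => ?_)
    have h1 : (1:ℝ) ≤ (1 + x.2) ^ p :=
      Real.one_le_rpow (by have : (0:ℝ) < x.2 := hx.2; linarith) hp0.le
    have h2 : (0:ℝ) ≤ |u x| ^ p := Real.rpow_nonneg (abs_nonneg _) _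
    rw [Real.norm_eq_abs, hF, abs_of_nonneg (div_nonneg h2 (by linarith))]
    exact div_le_self h2 h1
  -- Fubini
  have hFub : ∫ x in upperHalfSpace n, F x
      = ∫ x' : Fin n → ℝ, ∫ t in Ioi (0:ℝ), F (x', t) := by
    rw [hSset]
    rw [show ∫ x in (univ : Set (Fin n → ℝ)) ×ˢ Ioi (0:ℝ), F x
        = ∫ x in (univ : Set (Fin n → ℝ)) ×ˢ Ioi (0:ℝ), F x
          ∂((volume : Measure (Fin n → ℝ)).prod volume) from by rw [← hvol]]
    rw [setIntegral_prod F (by rwa [← hvol, ← hSset, hSset])]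
    rw [Measure.restrict_univ]
  have hHub : ∫ x in upperHalfSpace n, H x
      = ∫ x' : Fin n → ℝ, ∫ t in Ioi (0:ℝ), H (x', t) := by
    rw [hSset]
    rw [show ∫ x in (univ : Set (Fin n → ℝ)) ×ˢ Ioi (0:ℝ), H x
        = ∫ x in (univ : Set (Fin n → ℝ)) ×ˢ Ioi (0:ℝ), H x
          ∂((volume : Measure (Fin n → ℝ)).prod volume) from by rw [← hvol]]
    rw [setIntegral_prod H (by rw [← hvol]; exact hH_int.integrableOn)]
    rw [Measure.restrict_univ]
  -- slice inequality
  have hslice : ∀ x' : Fin n → ℝ, ∫ t in Ioi (0:ℝ), F (x', t)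
      ≤ (p / (p - 1)) ^ p * (∫ t in Ioi (0:ℝ), H (x', t))
        + (p / (p - 1)) * |u (x', 0)| ^ p := by
    intro x'
    set v : ℝ → ℝ := fun t => u (x', t) with hv
    have hemb : Topology.IsClosedEmbedding (fun t : ℝ => (x', t)) :=
      Function.LeftInverse.isClosedEmbedding (f := Prod.snd) (fun t => rfl)
        continuous_snd (continuous_const.prodMk continuous_id)
    have hvsm : ContDiff ℝ (⊤ : ℕ∞) v := hu.comp (contDiff_const.prodMk contDiff_id)
    have hvcs : HasCompactSupport v := husupp.comp_isClosedEmbedding hemb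
    have h1d := oneD hp v hvsm hvcs
    have hder : ∀ t : ℝ, deriv v t = (fderiv ℝ u (x', t)) ((0 : Fin n → ℝ), (1:ℝ)) := by
      intro t
      have h1 : HasDerivAt (fun s : ℝ => ((x' : Fin n → ℝ), s)) ((0 : Fin n → ℝ), (1:ℝ)) t :=
        (hasDerivAt_const t x').prodMk (hasDerivAt_id t)
      have h2 := ((hu.differentiable (by simp) (x', t)).hasFDerivAt).comp_hasDerivAt t h1
      exact h2.deriv
    have hptbound : ∀ t : ℝ, |deriv v t| ^ p ≤ H (x', t) := by
      intro t
      rw [hder t, hH]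
      have hb : |(fderiv ℝ u (x', t)) ((0 : Fin n → ℝ), (1:ℝ))| ≤ ‖fderiv ℝ u (x', t)‖ := by
        have h3 := (fderiv ℝ u (x', t)).le_opNorm ((0 : Fin n → ℝ), (1:ℝ))
        have hn1 : ‖((0 : Fin n → ℝ), (1:ℝ))‖ = 1 := by
          simp [Prod.norm_def]
        rw [hn1, mul_one, Real.norm_eq_abs] at h3
        exact h3
      exact Real.rpow_le_rpow (abs_nonneg _) hb hp0.le
    have hc1 : Continuous (fun t : ℝ => H (x', t)) :=
      hH_cont.comp (continuous_const.prodMk continuous_id)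
    have hc2 : HasCompactSupport (fun t : ℝ => H (x', t)) :=
      hH_cs.comp_isClosedEmbedding hemb
    have hmono : ∫ t in Ioi (0:ℝ), |deriv v t| ^ p ≤ ∫ t in Ioi (0:ℝ), H (x', t) := by
      apply integral_mono_of_nonneg
        (Filter.Eventually.of_forall fun t => by positivity)
        ((hc1.integrable_of_hasCompactSupport hc2).integrableOn)
        (Filter.Eventually.of_forall fun t => hptbound t)
    have hcp0 : (0:ℝ) ≤ (p / (p - 1)) ^ p :=
      Real.rpow_nonneg (div_nonneg hp0.le (by linarith)) _
    calc ∫ t in Ioi (0:ℝ), F (x', t) = ∫ t in Ioi (0:ℝ), |v t| ^ p / (1 + t) ^ p := rfl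
      _ ≤ (p / (p - 1)) ^ p * (∫ t in Ioi (0:ℝ), |deriv v t| ^ p)
          + (p / (p - 1)) * |v 0| ^ p := h1d
      _ ≤ (p / (p - 1)) ^ p * (∫ t in Ioi (0:ℝ), H (x', t))
          + (p / (p - 1)) * |u (x', 0)| ^ p := by
          have : |v 0| ^ p = |u (x', 0)| ^ p := rfl
          rw [this]
          exact add_le_add_left (mul_le_mul_of_nonneg_left hmono hcp0) _
  -- boundary term integrable
  have hemb2 : Topology.IsClosedEmbedding (fun x' : Fin n → ℝ => ((x' : Fin n → ℝ), (0:ℝ))) :=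
    Function.LeftInverse.isClosedEmbedding (f := Prod.fst) (fun t => rfl)
      continuous_fst (continuous_id.prodMk continuous_const)
  have hb_cont : Continuous (fun x' : Fin n → ℝ => |u (x', 0)| ^ p) :=
    huabs.comp (continuous_id.prodMk continuous_const)
  have hb_cs : HasCompactSupport (fun x' : Fin n → ℝ => |u (x', 0)| ^ p) :=
    huabs_cs.comp_isClosedEmbedding hemb2
  have hb_int : Integrable (fun x' : Fin n → ℝ => |u (x', 0)| ^ p) :=
    hb_cont.integrable_of_hasCompactSupport hb_cs
  -- marginal of H
  have hJH_int : Integrable (fun x' : Fin n → ℝ => ∫ t in Ioi (0:ℝ), H (x', t)) := by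
    have h1 : IntegrableOn H ((univ : Set (Fin n → ℝ)) ×ˢ Ioi (0:ℝ)) := hH_int.integrableOn
    rw [IntegrableOn, hvol, ← Measure.prod_restrict] at h1
    have h2 := h1.integral_prod_left
    rwa [Measure.restrict_univ] at h2
  -- nonnegativity of slices
  have hIpos : ∀ x' : Fin n → ℝ, 0 ≤ ∫ t in Ioi (0:ℝ), F (x', t) := by
    intro x'
    apply setIntegral_nonneg measurableSet_Ioi
    intro t ht
    have h1 : (0:ℝ) < 1 + t := by have := mem_Ioi.mp ht; linarith
    exact div_nonneg (Real.rpow_nonneg (abs_nonneg _) _) (Real.rpow_pos_of_pos h1 p).le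
  -- put everything together
  rw [hFub]
  have hRint : Integrable (fun x' : Fin n → ℝ =>
      (p / (p - 1)) ^ p * (∫ t in Ioi (0:ℝ), H (x', t))
        + (p / (p - 1)) * |u (x', 0)| ^ p) :=
    (hJH_int.const_mul _).add (hb_int.const_mul _)
  have hfin := integral_mono_of_nonneg
    (Filter.Eventually.of_forall hIpos) hRint
    (Filter.Eventually.of_forall hslice)
  rw [integral_add (hJH_int.const_mul _) (hb_int.const_mul _),
    integral_const_mul, integral_const_mul, ← hHub] at hfin
  exact hfin
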